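/- Let H = ⟨g, h⟩ be a non-Abelian nilpotent group of class 2 whose commutator subgroup ⟨c⟩ = ⟨(g,h)⟩ has order 2, and let K be a commutative ring. Define σ on H by σ(g) = gc, σ(h) = hc (extended to an anti-automorphism of order two fixing ζ(H)), and let f be trivial. Then KH is σ-normal: xx^σ = x^σx for all x ∈ KH. -/

import Mathlib

noncomputable def sigmaMap {K G : Type*} [CommRing K] [Group G] (σ : G → G) (f : G →* Kˣ)
    (x : MonoidAlgebra K G) : MonoidAlgebra K G :=
  Finsupp.sum x.coeff fun g a => MonoidAlgebra.single (σ g) (a * (f g : K))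

/-! The commutator `c = g⁻¹h⁻¹gh` is central of order 2, so `g²` and `h²` commute with both
generators and are central; hence every element lies in one of the cosets `Z, gZ, hZ, ghZ` of
the centre `Z`. The anti-automorphism `σ` is the identity on `Z` and right multiplication by `c`
off `Z`. Splitting `x = a + b` into its parts supported on and off `Z` gives `x^σ = a + b c`
with `a` and `c` central in `KG`, and `a + b` commutes with `a + b c`. -/

open Subgroup MonoidAlgebra

section GroupTheory

variable {G : Type*} [Group G]

theorem commutator_le_center_of_lowerCentralSeries_two_eq_bot
    (hclass : (⊤ : Subgroup G).lowerCentralSeries 2 = ⊥) : commutator G ≤ center G := by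
  rw [Subgroup.lowerCentralSeries_succ, top_lowerCentralSeries_one,
    commutator_eq_bot_iff_le_centralizer, coe_top, centralizer_univ] at hclass
  exact hclass

theorem mem_center_of_commute_of_closure_pair_eq_top {g h z : G}
    (hgen : closure ({g, h} : Set G) = ⊤) (hzg : Commute z g) (hzh : Commute z h) :
    z ∈ center G := by
  have hle : closure ({g, h} : Set G) ≤ centralizer {z} := by
    rw [closure_le]
    rintro y (rfl | rfl)
    · exact mem_centralizer_singleton_iff.mpr hzg.eq.symm
    · exact mem_centralizer_singleton_iff.mpr hzh.eq.symm
  rw [mem_center_iff]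
  intro y
  exact mem_centralizer_singleton_iff.mp (hle (hgen ▸ mem_top y))

theorem exists_zpow_mul_zpow_mul_mem_center {g h : G}
    (hgen : closure ({g, h} : Set G) = ⊤) (hcent : commutator G ≤ center G) (u : G) :
    ∃ a b : ℤ, ∃ z ∈ center G, u = g ^ a * h ^ b * z := by
  have hu : Abelianization.of u ∈ closure {Abelianization.of g, Abelianization.of h} := by
    rw [← Set.image_pair, ← MonoidHom.map_closure, hgen]
    exact mem_map_of_mem _ trivial
  obtain ⟨a, b, hab⟩ := mem_closure_pair.mp hu
  refine ⟨a, b, (g ^ a * h ^ b)⁻¹ * u, hcent ?_, by group⟩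
  rw [← Abelianization.ker_of, MonoidHom.mem_ker, map_mul, map_inv, map_mul, map_zpow, map_zpow,
    hab, inv_mul_cancel]

theorem exists_mem_center_zpow_eq_or {g : G} (hg : g * g ∈ center G) (a : ℤ) :
    ∃ z ∈ center G, g ^ a = z ∨ g ^ a = g * z := by
  obtain ⟨k, rfl | rfl⟩ := Int.even_or_odd' a
  · exact ⟨(g * g) ^ k, zpow_mem hg k, .inl (by rw [zpow_mul, zpow_two])⟩
  · exact ⟨(g * g) ^ k, zpow_mem hg k, .inr (by rw [add_comm, zpow_one_add, zpow_mul, zpow_two])⟩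

theorem exists_mem_center_eq_or {g h : G} (hgen : closure ({g, h} : Set G) = ⊤)
    (hcent : commutator G ≤ center G) (hg : g * g ∈ center G) (hh : h * h ∈ center G) (u : G) :
    ∃ z ∈ center G, u = z ∨ u = g * z ∨ u = h * z ∨ u = g * h * z := by
  obtain ⟨a, b, z, hz, rfl⟩ := exists_zpow_mul_zpow_mul_mem_center hgen hcent u
  obtain ⟨x, hx, hga⟩ := exists_mem_center_zpow_eq_or hg a
  obtain ⟨y, hy, hhb⟩ := exists_mem_center_zpow_eq_or hh b
  have hxh (t : G) : x * (h * t) = h * (x * t) := by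
    rw [← mul_assoc, ← mem_center_iff.mp hx h, mul_assoc]
  refine ⟨x * y * z, mul_mem (mul_mem hx hy) hz, ?_⟩
  rcases hga with hga | hga <;> rcases hhb with hhb | hhb <;>
  simp only [hga, hhb, mul_assoc, hxh, true_or, or_true]

theorem apply_mul_of_mem_center_right {σ : G → G} (hanti : ∀ x y, σ (x * y) = σ y * σ x)
    (hσz : ∀ z ∈ center G, σ z = z) {z : G} (hz : z ∈ center G) (w : G) :
    σ (w * z) = σ w * z := by
  rw [hanti, hσz z hz, mem_center_iff.mp hz]

theorem eq_mul_of_notMem_center {g h c : G} (hgen : closure ({g, h} : Set G) = ⊤)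
    (hcent : commutator G ≤ center G) (hc : c ∈ center G) (hc2 : c ^ 2 = 1)
    (hgh : g * h = h * g * c) {σ : G → G} (hanti : ∀ x y, σ (x * y) = σ y * σ x)
    (hσg : σ g = g * c) (hσh : σ h = h * c) (hσz : ∀ z ∈ center G, σ z = z)
    {u : G} (hu : u ∉ center G) : σ u = u * c := by
  have hcc : c * c = 1 := by rw [← sq, hc2]
  have hcomm (y : G) : c * y = y * c := (mem_center_iff.mp hc y).symm
  have hhg : h * g = g * h * c := by
    rw [hgh, mul_assoc, hcc, mul_one]
  have hsq {x y : G} (hxy : x * y = y * x * c) : Commute (x * x) y := by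
    -- `x x y = x y x c = y x c x c = y x x c²`
    rw [Commute, SemiconjBy, mul_assoc, hxy, ← mul_assoc, ← mul_assoc, hxy, mul_assoc (y * x) c x,
      hcomm x, ← mul_assoc, mul_assoc _ c c, hcc, mul_one, mul_assoc]
  have hg2 : g * g ∈ center G :=
    mem_center_of_commute_of_closure_pair_eq_top hgen (.mul_left (.refl g) (.refl g)) (hsq hgh)
  have hh2 : h * h ∈ center G :=
    mem_center_of_commute_of_closure_pair_eq_top hgen (hsq hhg) (.mul_left (.refl h) (.refl h))
  have hσ_of_mul {w : G} (hw : σ w = w * c) {z : G} (hz : z ∈ center G) : σ (w * z) = w * z * c := by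
    rw [apply_mul_of_mem_center_right hanti hσz hz, hw, mul_assoc, hcomm, ← mul_assoc]
  obtain ⟨z, hz, rfl | rfl | rfl | rfl⟩ := exists_mem_center_eq_or hgen hcent hg2 hh2 u
  · exact absurd hz hu
  · exact hσ_of_mul hσg hz
  · exact hσ_of_mul hσh hz
  · refine hσ_of_mul ?_ hz
    rw [hanti, hσg, hσh, mul_assoc h c, ← mul_assoc c g c, hcomm g, mul_assoc g c c, hcc, mul_one,
      hhg]

end GroupTheory

theorem commute_add_add_mul {R : Type*} [Semiring R] {a b c : R} (hab : Commute a b)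
    (hac : Commute a c) (hbc : Commute b c) : Commute (a + b) (a + b * c) :=
  ((Commute.refl a).add_right (hab.mul_right hac)).add_left
    (hab.symm.add_right ((Commute.refl b).mul_right hbc))

section MonoidAlgebra

variable {K G : Type*} [CommRing K] [Group G]

theorem sigmaMap_add (σ : G → G) (f : G →* Kˣ) (x y : MonoidAlgebra K G) :
    sigmaMap σ f (x + y) = sigmaMap σ f x + sigmaMap σ f y :=
  Finsupp.sum_add_index' (fun _ => by simp) fun _ _ _ => by rw [add_mul, single_add]

theorem sigmaMap_one_eq_mul_single {σ : G → G} {c : G} {x : MonoidAlgebra K G}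
    (hx : ∀ u ∈ x.coeff.support, σ u = u * c) : sigmaMap σ 1 x = x * single c 1 := by
  conv_rhs => rw [← sum_coeff_single x]
  rw [sigmaMap, Finsupp.sum_mul]
  refine Finsupp.sum_congr fun u hu => ?_
  rw [single_mul_single, hx u hu, MonoidHom.one_apply, Units.val_one]

theorem commute_of_forall_mem_support_mem_center {x : MonoidAlgebra K G}
    (hx : ∀ u ∈ x.coeff.support, u ∈ center G) (y : MonoidAlgebra K G) : Commute x y := by
  rw [← sum_coeff_single x]
  exact Commute.sum_left _ _ _ fun u hu =>
    single_commute (fun m => (mem_center_iff.mp (hx u hu) m).symm) (Commute.all _) y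

theorem commute_self_sigmaMap_one {σ : G → G} {c : G} (hc : c ∈ center G)
    (hσz : ∀ z ∈ center G, σ z = z) (hσ : ∀ u ∉ center G, σ u = u * c)
    (x : MonoidAlgebra K G) : Commute x (sigmaMap σ 1 x) := by
  classical
  set a : MonoidAlgebra K G := ofCoeff (x.coeff.filter (· ∈ center G))
  set b : MonoidAlgebra K G := ofCoeff (x.coeff.filter (· ∉ center G))
  have hab : x = a + b := by
    rw [← ofCoeff_add, Finsupp.filter_add_filter_not]
  have ha (u) (hu : u ∈ a.coeff.support) : u ∈ center G := by
    simp only [a, Finsupp.support_filter, Finset.mem_filter] at hu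
    exact hu.2
  have hb (u) (hu : u ∈ b.coeff.support) : u ∉ center G := by
    simp only [b, Finsupp.support_filter, Finset.mem_filter] at hu
    exact hu.2
  have hσa : sigmaMap σ 1 a = a := by
    rw [sigmaMap_one_eq_mul_single (c := 1) fun u hu => by rw [mul_one, hσz u (ha u hu)],
      ← one_def, mul_one]
  have hσb : sigmaMap σ 1 b = b * single c 1 :=
    sigmaMap_one_eq_mul_single fun u hu => hσ u (hb u hu)
  rw [hab, sigmaMap_add, hσa, hσb]
  exact commute_add_add_mul (commute_of_forall_mem_support_mem_center ha b)
    (commute_of_forall_mem_support_mem_center ha _)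
    (single_commute (fun m => (mem_center_iff.mp hc m).symm) (Commute.all _) b).symm

end MonoidAlgebra

theorem stmt_13_general {K G : Type*} [CommRing K] [Group G] (g h : G)
    (hgen : Subgroup.closure ({g, h} : Set G) = ⊤)
    (hclass : (⊤ : Subgroup G).lowerCentralSeries 2 = ⊥)
    (hc2 : (g⁻¹ * h⁻¹ * g * h) ^ 2 = 1)
    (σ : G → G)
    (hanti : ∀ x y : G, σ (x * y) = σ y * σ x)
    (hσg : σ g = g * (g⁻¹ * h⁻¹ * g * h))
    (hσh : σ h = h * (g⁻¹ * h⁻¹ * g * h))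
    (hσz : ∀ z ∈ Subgroup.center G, σ z = z) :
    ∀ x : MonoidAlgebra K G,
      x * sigmaMap σ (1 : G →* Kˣ) x = sigmaMap σ (1 : G →* Kˣ) x * x := by
  have hcent := commutator_le_center_of_lowerCentralSeries_two_eq_bot hclass
  have hc : g⁻¹ * h⁻¹ * g * h ∈ center G := hcent <| by
    rw [_root_.commutator_def]
    simpa only [commutatorElement_def, inv_inv] using
      commutator_mem_commutator (mem_top g⁻¹) (mem_top h⁻¹)
  intro x
  exact (commute_self_sigmaMap_one hc hσz (fun u hu =>
    eq_mul_of_notMem_center hgen hcent hc hc2 (by group) hanti hσg hσh hσz hu) x).eq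

theorem stmt_13 {K G : Type*} [CommRing K] [Group G] (g h : G)
    (hgen : Subgroup.closure ({g, h} : Set G) = ⊤)
    (hnab : g * h ≠ h * g)
    (hclass : (⊤ : Subgroup G).lowerCentralSeries 2 = ⊥)
    (hcomm : commutator G = Subgroup.zpowers (g⁻¹ * h⁻¹ * g * h))
    (hc2 : (g⁻¹ * h⁻¹ * g * h) ^ 2 = 1)
    (σ : G → G)
    (hanti : ∀ x y : G, σ (x * y) = σ y * σ x)
    (hord : ∀ x : G, σ (σ x) = x)
    (hσg : σ g = g * (g⁻¹ * h⁻¹ * g * h))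
    (hσh : σ h = h * (g⁻¹ * h⁻¹ * g * h))
    (hσz : ∀ z ∈ Subgroup.center G, σ z = z) :
    ∀ x : MonoidAlgebra K G,
      x * sigmaMap σ (1 : G →* Kˣ) x = sigmaMap σ (1 : G →* Kˣ) x * x :=
  stmt_13_general g h hgen hclass hc2 σ hanti hσg hσh hσz
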